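/- (Optimal subset coupling.) Let α ≥ 1, δ ≥ 0, let μ₁, μ₂ be sub-distributions over A₁, A₂ of equal weight, and let S₁ ⊆ A₁, S₂ ⊆ A₂. Then μ₁(S₁) ≤ α·μ₂(S₂) + δ and μ₁(A₁∖S₁) ≤ α·μ₂(A₂∖S₂) + δ hold if and only if there exists a (ln α, δ)-approximate lifting of the relation {(a₁,a₂) : a₁ ∈ S₁ ↔ a₂ ∈ S₂} relating μ₁ and μ₂. -/

import Mathlib

/-!
That a lifting forces the two inequalities is the easy half of the approximate Strassen theorem:
the marginal condition turns `μ₁(T)` into `μL(T × A₂⋆)`, the distance condition bounds this by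
`α μR(T × A₂⋆) + δ`, and by the support condition `μR` carries `T × A₂⋆` into `A₁⋆ × R(T)`, whose
`μR`-mass is `μ₂(R(T))`. For our relation `R(S₁) ⊆ S₂` and `R(S₁ᶜ) ⊆ S₂ᶜ`.

Conversely, restrict `μ₁, μ₂` to the blocks `S₁, S₂` and `S₁ᶜ, S₂ᶜ`. A block with masses
`m ≤ α m' + δ` is lifted by product witnesses: `μR = ν₁ ⊗ ν₂ / m`, and `μL` is `μR` scaled by
`min(m, α m') / m' ≤ α`, with the leftover `ν₁`-mass `m - α m'` sent to `⋆`, the only place where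
`μL` exceeds `α μR`. Liftings of the two blocks add, and so do their `δ`s; but as the weights are
equal and `α ≥ 1`, one of the blocks has `m ≤ α m'` and needs no `δ` at all.
-/
open scoped ENNReal

noncomputable section

/-- A discrete sub-distribution: total mass at most 1. -/
def IsSubDist {A : Type*} (μ : A → ℝ≥0∞) : Prop := ∑' a, μ a ≤ 1

/-- Mass of a set under `μ`. -/
def setSum {A : Type*} (μ : A → ℝ≥0∞) (S : Set A) : ℝ≥0∞ := ∑' a : S, μ (a : A)

/-- `μ` is a coupling of `(μ₁, μ₂)`: a joint sub-distribution with the given marginals. -/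
def IsCoupling {A₁ A₂ : Type*} (μ : A₁ × A₂ → ℝ≥0∞)
    (μ₁ : A₁ → ℝ≥0∞) (μ₂ : A₂ → ℝ≥0∞) : Prop :=
  IsSubDist μ ∧ (∀ a₁, ∑' a₂, μ (a₁, a₂) = μ₁ a₁) ∧ (∀ a₂, ∑' a₁, μ (a₁, a₂) = μ₂ a₂)

/-- Image of a set under a relation. -/
def relImage {A₁ A₂ : Type*} (R : Set (A₁ × A₂)) (S : Set A₁) : Set A₂ :=
  {a₂ | ∃ a₁ ∈ S, (a₁, a₂) ∈ R}

/-- `R⋆ = R ∪ (A₁ × {⋆}) ∪ ({⋆} × A₂)`, with `⋆` modelled by `none`. -/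
def starRel {A₁ A₂ : Type*} (R : Set (A₁ × A₂)) : Set (Option A₁ × Option A₂) :=
  {p | match p with
       | (some a₁, some a₂) => (a₁, a₂) ∈ R
       | (some _, none) => True
       | (none, some _) => True
       | (none, none) => False}

/-- `(ε, δ)`-approximate `R`-lifting of `(μ₁, μ₂)`, witnessed by two
sub-distributions over `A₁⋆ × A₂⋆` with marginal, support, and ε-distance conditions. -/
def ApproxLift {A₁ A₂ : Type*} (ε δ : ℝ) (R : Set (A₁ × A₂))
    (μ₁ : A₁ → ℝ≥0∞) (μ₂ : A₂ → ℝ≥0∞) : Prop :=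
  ∃ μL μR : Option A₁ × Option A₂ → ℝ≥0∞,
    IsSubDist μL ∧ IsSubDist μR ∧
    (∀ a₁, ∑' o, μL (some a₁, o) = μ₁ a₁) ∧ (∀ o, μL (none, o) = 0) ∧
    (∀ a₂, ∑' o, μR (o, some a₂) = μ₂ a₂) ∧ (∀ o, μR (o, none) = 0) ∧
    {p | μL p ≠ 0} ⊆ starRel R ∧ {p | μR p ≠ 0} ⊆ starRel R ∧
    ∀ S : Set (Option A₁ × Option A₂),
      setSum μL S ≤ ENNReal.ofReal (Real.exp ε) * setSum μR S + ENNReal.ofReal δ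

open Set

namespace ENNReal

theorem tsum_option {β : Type*} (f : Option β → ℝ≥0∞) :
    ∑' o, f o = f none + ∑' b, f (some b) := by
  rw [← ENNReal.summable.tsum_add_tsum_compl (s := range some) ENNReal.summable,
    tsum_range f (Option.some_injective β), compl_range_some, tsum_singleton, add_comm]

theorem le_mul_or_le_mul_of_add_eq {m₁ n₁ m₂ n₂ c : ℝ≥0∞} (hc : 1 ≤ c)
    (h : m₁ + n₁ = m₂ + n₂) : m₁ ≤ c * m₂ ∨ n₁ ≤ c * n₂ := by
  by_contra! ⟨hm, hn⟩
  have hlt : m₂ + n₂ < m₁ + n₁ :=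
    ENNReal.add_lt_add ((le_mul_of_one_le_left' hc).trans_lt hm)
      ((le_mul_of_one_le_left' hc).trans_lt hn)
  exact hlt.ne' h

end ENNReal

section

variable {A A₁ A₂ : Type*}

theorem tsum_option_prod_fst (f : Option A₁ × Option A₂ → ℝ≥0∞) :
    ∑' p, f p = ∑' o, f (none, o) + ∑' a, ∑' o, f (some a, o) := by
  rw [ENNReal.tsum_prod', ENNReal.tsum_option]

theorem tsum_option_prod_snd (f : Option A₁ × Option A₂ → ℝ≥0∞) :
    ∑' p, f p = ∑' o, f (o, none) + ∑' a, ∑' o, f (o, some a) := by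
  rw [ENNReal.tsum_prod', ENNReal.tsum_comm, ENNReal.tsum_option]

theorem setSum_eq_tsum_indicator (μ : A → ℝ≥0∞) (S : Set A) :
    setSum μ S = ∑' a, S.indicator μ a :=
  tsum_subtype S μ

theorem setSum_add (f g : A → ℝ≥0∞) (S : Set A) :
    setSum (f + g) S = setSum f S + setSum g S :=
  ENNReal.tsum_add

theorem setSum_mono (μ : A → ℝ≥0∞) {S T : Set A} (h : S ⊆ T) : setSum μ S ≤ setSum μ T :=
  ENNReal.tsum_mono_subtype μ h

theorem setSum_le_setSum_of_support {μ : A → ℝ≥0∞} {S T : Set A}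
    (h : ∀ a ∈ S, μ a ≠ 0 → a ∈ T) : setSum μ S ≤ setSum μ T := by
  simp only [setSum_eq_tsum_indicator]
  refine ENNReal.tsum_le_tsum fun a => ?_
  by_cases haS : a ∈ S
  · by_cases h0 : μ a = 0
    · rw [indicator_of_mem haS, h0]
      exact zero_le
    · rw [indicator_of_mem haS, indicator_of_mem (h a haS h0)]
  · simp [haS]

theorem setSum_le_mul_add_of_le {β : Type*} {f g e : β → ℝ≥0∞} {c : ℝ≥0∞}
    (h : ∀ p, f p ≤ c * g p + e p) (U : Set β) :
    setSum f U ≤ c * setSum g U + ∑' p, e p :=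
  calc setSum f U ≤ ∑' p : U, (c * g p + e p) := ENNReal.tsum_le_tsum fun p => h p
    _ = c * setSum g U + setSum e U := by rw [ENNReal.tsum_add, ENNReal.tsum_mul_left]; rfl
    _ ≤ c * setSum g U + ∑' p, e p := by
      gcongr; exact ENNReal.tsum_comp_le_tsum_of_injective Subtype.val_injective e

theorem setSum_preimage_fst_some (μ : Option A₁ × Option A₂ → ℝ≥0∞) (T : Set A₁) :
    setSum μ (Prod.fst ⁻¹' (some '' T)) = setSum (fun a => ∑' o, μ (some a, o)) T := by
  simp only [setSum_eq_tsum_indicator]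
  rw [tsum_option_prod_fst]
  simp only [mem_preimage, mem_image, reduceCtorEq, and_false, exists_false, not_false_eq_true,
    indicator_of_notMem, tsum_zero, zero_add]
  refine tsum_congr fun a => ?_
  by_cases ha : a ∈ T <;> simp [ha]

theorem setSum_preimage_snd_some (μ : Option A₁ × Option A₂ → ℝ≥0∞) (T : Set A₂) :
    setSum μ (Prod.snd ⁻¹' (some '' T)) = setSum (fun a => ∑' o, μ (o, some a)) T := by
  simp only [setSum_eq_tsum_indicator]
  rw [tsum_option_prod_snd]
  simp only [mem_preimage, mem_image, reduceCtorEq, and_false, exists_false, not_false_eq_true,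
    indicator_of_notMem, tsum_zero, zero_add]
  refine tsum_congr fun a => ?_
  by_cases ha : a ∈ T <;> simp [ha]

theorem IsSubDist.indicator {μ : A → ℝ≥0∞} (h : IsSubDist μ) (S : Set A) :
    IsSubDist (S.indicator μ) :=
  (ENNReal.tsum_le_tsum (indicator_le_self S μ)).trans h

theorem IsSubDist.of_marginal_fst {μ : Option A₁ × Option A₂ → ℝ≥0∞} {ν : A₁ → ℝ≥0∞}
    (hν : IsSubDist ν) (hnone : ∀ o, μ (none, o) = 0) (hmarg : ∀ a, ∑' o, μ (some a, o) = ν a) :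
    IsSubDist μ := by
  rw [IsSubDist, tsum_option_prod_fst]
  simp only [hnone, hmarg, tsum_zero, zero_add]
  exact hν

theorem IsSubDist.of_marginal_snd {μ : Option A₁ × Option A₂ → ℝ≥0∞} {ν : A₂ → ℝ≥0∞}
    (hν : IsSubDist ν) (hnone : ∀ o, μ (o, none) = 0) (hmarg : ∀ a, ∑' o, μ (o, some a) = ν a) :
    IsSubDist μ := by
  rw [IsSubDist, tsum_option_prod_snd]
  simp only [hnone, hmarg, tsum_zero, zero_add]
  exact hν

variable {ε δ δ' : ℝ} {R : Set (A₁ × A₂)} {μ₁ μ₁' : A₁ → ℝ≥0∞} {μ₂ μ₂' : A₂ → ℝ≥0∞}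

theorem ApproxLift.setSum_le (h : ApproxLift ε δ R μ₁ μ₂) (T : Set A₁) :
    setSum μ₁ T ≤
      ENNReal.ofReal (Real.exp ε) * setSum μ₂ (relImage R T) + ENNReal.ofReal δ := by
  obtain ⟨μL, μR, -, -, hmargL, -, hmargR, hnoneR, -, hsuppR, hdist⟩ := h
  have hsupp : ∀ p ∈ Prod.fst ⁻¹' (some '' T), μR p ≠ 0 →
      p ∈ Prod.snd ⁻¹' (some '' relImage R T) := by
    rintro ⟨_, o⟩ ⟨a, ha, rfl⟩ hp
    cases o with
    | none => exact absurd (hnoneR _) hp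
    | some b => exact ⟨b, ⟨a, ha, hsuppR hp⟩, rfl⟩
  calc setSum μ₁ T = setSum μL (Prod.fst ⁻¹' (some '' T)) := by
        rw [setSum_preimage_fst_some, funext hmargL]
    _ ≤ _ := hdist _
    _ ≤ ENNReal.ofReal (Real.exp ε) * setSum μR (Prod.snd ⁻¹' (some '' relImage R T)) +
          ENNReal.ofReal δ := by
        gcongr; exact setSum_le_setSum_of_support hsupp
    _ = _ := by rw [setSum_preimage_snd_some, funext hmargR]

theorem ApproxLift.add (h : ApproxLift ε δ R μ₁ μ₂) (h' : ApproxLift ε δ' R μ₁' μ₂')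
    (hδ : 0 ≤ δ) (hδ' : 0 ≤ δ') (h₁ : IsSubDist (μ₁ + μ₁')) (h₂ : IsSubDist (μ₂ + μ₂')) :
    ApproxLift ε (δ + δ') R (μ₁ + μ₁') (μ₂ + μ₂') := by
  obtain ⟨L, M, -, -, hmargL, hnoneL, hmargM, hnoneM, hsuppL, hsuppM, hdist⟩ := h
  obtain ⟨L', M', -, -, hmargL', hnoneL', hmargM', hnoneM', hsuppL', hsuppM', hdist'⟩ := h'
  have hmarg₁ : ∀ a, ∑' o, (L + L') (some a, o) = (μ₁ + μ₁') a := fun a => by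
    simp only [Pi.add_apply, ENNReal.tsum_add, hmargL, hmargL']
  have hmarg₂ : ∀ a, ∑' o, (M + M') (o, some a) = (μ₂ + μ₂') a := fun a => by
    simp only [Pi.add_apply, ENNReal.tsum_add, hmargM, hmargM']
  have hnone₁ : ∀ o, (L + L') (none, o) = 0 := fun o => by simp [hnoneL, hnoneL']
  have hnone₂ : ∀ o, (M + M') (o, none) = 0 := fun o => by simp [hnoneM, hnoneM']
  refine ⟨L + L', M + M', h₁.of_marginal_fst hnone₁ hmarg₁, h₂.of_marginal_snd hnone₂ hmarg₂,
    hmarg₁, hnone₁, hmarg₂, hnone₂, ?_, ?_, fun U => ?_⟩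
  · intro p hp
    by_cases h0 : L p = 0
    · exact hsuppL' fun h0' => hp (by simp [h0, h0'])
    · exact hsuppL h0
  · intro p hp
    by_cases h0 : M p = 0
    · exact hsuppM' fun h0' => hp (by simp [h0, h0'])
    · exact hsuppM h0
  calc setSum (L + L') U = setSum L U + setSum L' U := setSum_add L L' U
    _ ≤ _ := add_le_add (hdist U) (hdist' U)
    _ = _ := by rw [setSum_add, ENNReal.ofReal_add hδ hδ']; ring

end

section

variable {A₁ A₂ : Type*} (ν₁ : A₁ → ℝ≥0∞) (ν₂ : A₂ → ℝ≥0∞) (s r₁ r₂ : ℝ≥0∞)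

def starProd : Option A₁ × Option A₂ → ℝ≥0∞
  | (some a₁, some a₂) => s * ν₁ a₁ * ν₂ a₂
  | (some a₁, none) => r₁ * ν₁ a₁
  | (none, some a₂) => r₂ * ν₂ a₂
  | (none, none) => 0

theorem starProd_none_left (o : Option A₂) : starProd ν₁ ν₂ s r₁ 0 (none, o) = 0 := by
  cases o <;> simp [starProd]

theorem starProd_none_right (o : Option A₁) : starProd ν₁ ν₂ s 0 r₂ (o, none) = 0 := by
  cases o <;> simp [starProd]

theorem tsum_starProd_some_left (a : A₁) :
    ∑' o, starProd ν₁ ν₂ s r₁ r₂ (some a, o) = (r₁ + s * ∑' b, ν₂ b) * ν₁ a := by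
  simp only [ENNReal.tsum_option, starProd, mul_assoc, ENNReal.tsum_mul_left]
  ring

theorem tsum_starProd_some_right (b : A₂) :
    ∑' o, starProd ν₁ ν₂ s r₁ r₂ (o, some b) = (r₂ + s * ∑' a, ν₁ a) * ν₂ b := by
  simp only [ENNReal.tsum_option, starProd, ENNReal.tsum_mul_right, ENNReal.tsum_mul_left]
  ring

theorem tsum_starProd_of_none_left :
    ∑' p, starProd ν₁ ν₂ s r₁ 0 p = (r₁ + s * ∑' b, ν₂ b) * ∑' a, ν₁ a := by
  simp only [tsum_option_prod_fst, starProd_none_left, tsum_zero, zero_add,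
    tsum_starProd_some_left, ENNReal.tsum_mul_left]

theorem support_starProd_subset {R : Set (A₁ × A₂)}
    (hR : ∀ a₁ a₂, ν₁ a₁ ≠ 0 → ν₂ a₂ ≠ 0 → (a₁, a₂) ∈ R) :
    {p | starProd ν₁ ν₂ s r₁ r₂ p ≠ 0} ⊆ starRel R := by
  rintro ⟨_ | a₁, _ | a₂⟩ hp
  · exact hp rfl
  all_goals try trivial
  refine hR a₁ a₂ (fun h => hp ?_) (fun h => hp ?_) <;> simp [starProd, h]

end

theorem approxLift_of_tsum_le {A₁ A₂ : Type*} {ε δ : ℝ} {R : Set (A₁ × A₂)}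
    {ν₁ : A₁ → ℝ≥0∞} {ν₂ : A₂ → ℝ≥0∞} (hν₁ : IsSubDist ν₁) (hν₂ : IsSubDist ν₂)
    (hR : ∀ a₁ a₂, ν₁ a₁ ≠ 0 → ν₂ a₂ ≠ 0 → (a₁, a₂) ∈ R)
    (h : ∑' a, ν₁ a ≤ ENNReal.ofReal (Real.exp ε) * ∑' a, ν₂ a + ENNReal.ofReal δ) :
    ApproxLift ε δ R ν₁ ν₂ := by
  set c := ENNReal.ofReal (Real.exp ε)
  set m := ∑' a, ν₁ a
  set m' := ∑' a, ν₂ a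
  have hm : m ≠ ∞ := ne_top_of_le_ne_top ENNReal.one_ne_top hν₁
  have hm' : m' ≠ ∞ := ne_top_of_le_ne_top ENNReal.one_ne_top hν₂
  set t := min m (c * m') / m'
  have ht : t ≤ c := ENNReal.div_le_of_le_mul (min_le_right _ _)
  have htm : t * m' = min m (c * m') :=
    ENNReal.div_mul_cancel' (fun h0 => by simp [h0]) (fun h => absurd h hm')
  set L := starProd ν₁ ν₂ (t * m⁻¹) ((m - t * m') / m) 0
  -- if `ν₁ = 0`, all of `ν₂` has to be matched with `⋆`
  set M := starProd ν₁ ν₂ m⁻¹ 0 (if m = 0 then 1 else 0)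
  have hmargL : ∀ a, ∑' o, L (some a, o) = ν₁ a := by
    intro a
    rw [tsum_starProd_some_left]
    rcases eq_or_ne (ν₁ a) 0 with h0 | h0
    · simp [h0]
    have hm0 : m ≠ 0 := ne_bot_of_le_ne_bot h0 (ENNReal.le_tsum a)
    rw [mul_right_comm, ← div_eq_mul_inv, ENNReal.div_add_div_same,
      tsub_add_cancel_of_le (htm ▸ min_le_left _ _), ENNReal.div_self hm0 hm, one_mul]
  have hmargM : ∀ b, ∑' o, M (o, some b) = ν₂ b := by
    intro b
    rw [tsum_starProd_some_right]
    change (_ + m⁻¹ * m) * ν₂ b = ν₂ b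
    rcases eq_or_ne m 0 with h0 | h0
    · simp [h0]
    · simp [h0, ENNReal.inv_mul_cancel h0 hm]
  refine ⟨L, M, hν₁.of_marginal_fst (starProd_none_left _ _ _ _) hmargL,
    hν₂.of_marginal_snd (starProd_none_right _ _ _ _) hmargM, hmargL,
    starProd_none_left _ _ _ _, hmargM, starProd_none_right _ _ _ _,
    support_starProd_subset _ _ _ _ _ hR, support_starProd_subset _ _ _ _ _ hR, fun U => ?_⟩
  set E := starProd ν₁ ν₂ 0 ((m - t * m') / m) 0
  have hLM : ∀ p, L p ≤ c * M p + E p := by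
    rintro ⟨_ | a, _ | b⟩ <;> simp [L, M, E, starProd, mul_assoc]
    exact mul_le_mul_left ht _
  have hE : ∑' p, E p ≤ ENNReal.ofReal δ :=
    calc ∑' p, E p = (m - t * m') / m * m := by
          rw [tsum_starProd_of_none_left, zero_mul, add_zero]
    _ ≤ m - t * m' := by rw [mul_comm]; exact ENNReal.mul_div_le
    _ = m - c * m' := by rw [htm, tsub_min]
    _ ≤ ENNReal.ofReal δ := tsub_le_iff_left.2 h
  exact (setSum_le_mul_add_of_le hLM U).trans (by gcongr)

theorem approxLift_mem_iff_mem_of_setSum_le {A₁ A₂ : Type*} {ε δ₁ δ₂ : ℝ}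
    {μ₁ : A₁ → ℝ≥0∞} {μ₂ : A₂ → ℝ≥0∞} {S₁ : Set A₁} {S₂ : Set A₂}
    (h₁ : IsSubDist μ₁) (h₂ : IsSubDist μ₂) (hδ₁ : 0 ≤ δ₁) (hδ₂ : 0 ≤ δ₂)
    (hS : setSum μ₁ S₁ ≤ ENNReal.ofReal (Real.exp ε) * setSum μ₂ S₂ + ENNReal.ofReal δ₁)
    (hSc : setSum μ₁ S₁ᶜ ≤ ENNReal.ofReal (Real.exp ε) * setSum μ₂ S₂ᶜ + ENNReal.ofReal δ₂) :
    ApproxLift ε (δ₁ + δ₂) {p : A₁ × A₂ | p.1 ∈ S₁ ↔ p.2 ∈ S₂} μ₁ μ₂ := by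
  have hin : ApproxLift ε δ₁ {p : A₁ × A₂ | p.1 ∈ S₁ ↔ p.2 ∈ S₂}
      (S₁.indicator μ₁) (S₂.indicator μ₂) := by
    refine approxLift_of_tsum_le (h₁.indicator S₁) (h₂.indicator S₂) (fun a₁ a₂ ha₁ ha₂ => ?_) ?_
    · exact iff_of_true (mem_of_indicator_ne_zero ha₁) (mem_of_indicator_ne_zero ha₂)
    · simpa only [setSum_eq_tsum_indicator] using hS
  have hout : ApproxLift ε δ₂ {p : A₁ × A₂ | p.1 ∈ S₁ ↔ p.2 ∈ S₂}
      (S₁ᶜ.indicator μ₁) (S₂ᶜ.indicator μ₂) := by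
    refine approxLift_of_tsum_le (h₁.indicator S₁ᶜ) (h₂.indicator S₂ᶜ)
      (fun a₁ a₂ ha₁ ha₂ => ?_) ?_
    · exact iff_of_false (mem_of_indicator_ne_zero ha₁) (mem_of_indicator_ne_zero ha₂)
    · simpa only [setSum_eq_tsum_indicator] using hSc
  have := hin.add hout hδ₁ hδ₂ (by rwa [indicator_self_add_compl])
    (by rwa [indicator_self_add_compl])
  rwa [indicator_self_add_compl, indicator_self_add_compl] at this

theorem optimal_subset_coupling_general {A₁ A₂ : Type*}
    (μ₁ : A₁ → ℝ≥0∞) (μ₂ : A₂ → ℝ≥0∞)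
    (h₁ : IsSubDist μ₁) (h₂ : IsSubDist μ₂)
    (hw : ∑' a, μ₁ a = ∑' a, μ₂ a)
    (S₁ : Set A₁) (S₂ : Set A₂) (α δ : ℝ) (hα : 1 ≤ α) (hδ : 0 ≤ δ) :
    (setSum μ₁ S₁ ≤ ENNReal.ofReal α * setSum μ₂ S₂ + ENNReal.ofReal δ ∧
      setSum μ₁ S₁ᶜ ≤ ENNReal.ofReal α * setSum μ₂ S₂ᶜ + ENNReal.ofReal δ) ↔
      ApproxLift (Real.log α) δ {p : A₁ × A₂ | p.1 ∈ S₁ ↔ p.2 ∈ S₂} μ₁ μ₂ := by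
  have hc : ENNReal.ofReal α = ENNReal.ofReal (Real.exp (Real.log α)) := by
    rw [Real.exp_log (by linarith)]
  rw [hc]
  constructor
  · rintro ⟨hS, hSc⟩
    have hc1 : 1 ≤ ENNReal.ofReal (Real.exp (Real.log α)) := by
      rw [← hc, ← ENNReal.ofReal_one]; exact ENNReal.ofReal_le_ofReal hα
    have hsplit : setSum μ₁ S₁ + setSum μ₁ S₁ᶜ = setSum μ₂ S₂ + setSum μ₂ S₂ᶜ := by
      simp only [setSum, ENNReal.summable.tsum_add_tsum_compl ENNReal.summable, hw]
    rcases ENNReal.le_mul_or_le_mul_of_add_eq hc1 hsplit with hS' | hSc'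
    · simpa using approxLift_mem_iff_mem_of_setSum_le h₁ h₂ le_rfl hδ (by simpa using hS') hSc
    · simpa using approxLift_mem_iff_mem_of_setSum_le h₁ h₂ hδ le_rfl hS (by simpa using hSc')
  · intro h
    refine ⟨(h.setSum_le S₁).trans ?_, (h.setSum_le S₁ᶜ).trans ?_⟩ <;>
      gcongr <;> apply setSum_mono <;> rintro a₂ ⟨a₁, ha₁, hR⟩
    exacts [hR.mp ha₁, fun h => ha₁ (hR.mpr h)]

theorem optimal_subset_coupling {A₁ A₂ : Type*} [Countable A₁] [Countable A₂]
    (μ₁ : A₁ → ℝ≥0∞) (μ₂ : A₂ → ℝ≥0∞)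
    (h₁ : IsSubDist μ₁) (h₂ : IsSubDist μ₂)
    (hw : ∑' a, μ₁ a = ∑' a, μ₂ a)
    (S₁ : Set A₁) (S₂ : Set A₂) (α δ : ℝ) (hα : 1 ≤ α) (hδ : 0 ≤ δ) :
    (setSum μ₁ S₁ ≤ ENNReal.ofReal α * setSum μ₂ S₂ + ENNReal.ofReal δ ∧
      setSum μ₁ S₁ᶜ ≤ ENNReal.ofReal α * setSum μ₂ S₂ᶜ + ENNReal.ofReal δ) ↔
      ApproxLift (Real.log α) δ {p : A₁ × A₂ | p.1 ∈ S₁ ↔ p.2 ∈ S₂} μ₁ μ₂ :=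
  optimal_subset_coupling_general μ₁ μ₂ h₁ h₂ hw S₁ S₂ α δ hα hδ
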